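/- arXiv:1812.05151 — 3 statements merged into one kernel-verified Lean document; each statement's English description precedes it below -/
import Mathlib

section
/- The map u^A defined as the cycle (a_1 b_1 a_2 b_2 ... a_n b_n c) on A (fixing all other elements) is a bijection of A, and u^A is the only fundamental operation of the algebra A with any element of C = {a_1,...,a_n,b_1,...,b_n} in its range restricted appropriately; in particular, for every element x of C there is no element y of A with f^A(y_1,...,y_n) = x, and no u_{pqr} maps anything to x except via the identity part, which cannot produce elements of C as new values. -/
/- Common formalization of the construction from
   "On the Descending Central Series of Higher Commutators for Simple Algebras".
   We fix `n = m + 2` (so `n ≥ 2` automatically). -/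

namespace Paper

/-- The universe of the algebra `A`: generators `a i j`, `b i j`, the elements
`d k` (here 0-indexed, `d k` is the paper's `d_{k+1}`), the element `c`, and
formal pairs `(x, s)` created at the successive stages of the construction. -/
inductive Uni (m : ℕ) : Type
  | a (i : Fin (m + 2)) (j : ℕ) : Uni m
  | b (i : Fin (m + 2)) (j : ℕ) : Uni m
  | d (k : ℕ) : Uni m
  | c : Uni m
  | pair (x : Fin (m + 2) → Uni m) (s : ℕ) : Uni m

variable {m : ℕ}

/-- membership in `B = { a_{i,j}, b_{i,j} }`. -/
def inB : Uni m → Prop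
  | .a _ _ => True
  | .b _ _ => True
  | _ => False

/-- membership in `C = { a_1, …, a_n, b_1, …, b_n }` (`a_i = a_{i,0}`). -/
def inC : Uni m → Prop
  | .a _ 0 => True
  | .b _ 0 => True
  | _ => False

/-- the binary digit used to encode a tuple in the base domain. -/
def bitOf : Uni m → ℕ
  | .b _ _ => 1
  | _ => 0

/-- The base domain `D₀ = { (x_1,…,x_n) : x_i ∈ {a_i, b_i} }`. -/
def D0 : Set (Fin (m + 2) → Uni m) := {x | ∀ i, x i = .a i 0 ∨ x i = .b i 0}

/-- the binary code of the first `n - 1` coordinates of a tuple. -/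
def code (x : Fin (m + 2) → Uni m) : ℕ :=
  ∑ i : Fin (m + 2), if i.val < m + 1 then bitOf (x i) * 2 ^ i.val else 0

/-- the stage at which an element appears (`A₀` elements at stage 0). -/
def stage : Uni m → ℕ
  | .pair _ s => s + 1
  | _ => 0

/-- the stage at which a tuple first lies in `A_i^n`. -/
def stageTup (x : Fin (m + 2) → Uni m) : ℕ := Finset.univ.sup fun i => stage (x i)

open Classical in
/-- The `n`-ary basic operation `f^A`.  On `D₀` it takes the values
`d_1, …, d_{2^{n-1}+1}` (0-indexed here) as in the paper: the tuple with
binary code `j-1` on its first `n-1` coordinates goes to `d_j`, except that the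
all-`b` tuple goes to `d_{2^{n-1}+1}`.  Off `D₀` it is the canonical injection
into formal pairs, tagged by the stage. -/
noncomputable def fA (x : Fin (m + 2) → Uni m) : Uni m :=
  if x ∈ D0 then
    if code x = 2 ^ (m + 1) - 1 ∧ bitOf (x ⟨m + 1, by omega⟩) = 1 then .d (2 ^ (m + 1))
    else .d (code x)
  else .pair x (stageTup x)

/-- The permutation `u^A = (a_1 b_1 a_2 b_2 … a_n b_n c)`. -/
def uA : Uni m → Uni m
  | .a i 0 => .b i 0
  | .b i 0 => if h : i.val + 1 < m + 2 then .a ⟨i.val + 1, h⟩ 0 else .c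
  | .c => .a ⟨0, by omega⟩ 0
  | x => x

open Classical in
/-- The unary operation `u_{pqr}`: a 3-cycle on `p, q, r`, shifting the second
index on `B`, the identity elsewhere. -/
noncomputable def upqr (p q r : Uni m) (x : Uni m) : Uni m :=
  if x = p then q
  else if x = q then r
  else if x = r then p
  else match x with
    | .a i j => .a i (j + 1)
    | .b i j => .b i (j + 1)
    | y => y

/-- `(p, q, r)` is a legitimate index triple for `u_{pqr}`: pairwise distinct
elements of `A \ B`. -/
def OkTriple (p q r : Uni m) : Prop :=
  p ≠ q ∧ q ≠ r ∧ p ≠ r ∧ ¬ inB p ∧ ¬ inB q ∧ ¬ inB r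

/-- Terms in the language of `A` in `k` variables. -/
inductive Tm (m k : ℕ) : Type
  | var (v : Fin k) : Tm m k
  | f (args : Fin (m + 2) → Tm m k) : Tm m k
  | u (t : Tm m k) : Tm m k
  | upqr (p q r : Uni m) (t : Tm m k) : Tm m k

/-- A term is well formed when every `u_{pqr}` symbol occurring in it is indexed
by a legitimate triple. -/
def TmOk {k : ℕ} : Tm m k → Prop
  | .var _ => True
  | .f args => ∀ i, TmOk (args i)
  | .u t => TmOk t
  | .upqr p q r t => OkTriple p q r ∧ TmOk t

/-- Interpretation of a term as a term operation of `A`. -/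
noncomputable def eval {k : ℕ} : Tm m k → (Fin k → Uni m) → Uni m
  | .var v, x => x v
  | .f args, x => fA fun i => eval (args i) x
  | .u t, x => uA (eval t x)
  | .upqr p q r t, x => upqr p q r (eval t x)

/-- The `k`-term cube of an operation `t` on pairs `(p_i, q_i)`: vertex `l`
(0-indexed, `l` is the paper's `i - 1`) evaluates `t` on the tuple choosing
`q i` in coordinate `i` exactly when the corresponding binary digit of `l` is
`1` (coordinate `0` corresponds to the most significant digit, so the pairs
`(2j-1, 2j)` of the paper are the vertices `(2j-2, 2j-1)` here, differing in
the last coordinate). -/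
def cube {α : Type*} (k : ℕ) (t : (Fin k → α) → α) (p q : Fin k → α) (l : ℕ) : α :=
  t fun i => if l / 2 ^ (k - 1 - i.val) % 2 = 1 then q i else p i

/-- The `k`-term cube of a `K`-ary term operation whose variables are grouped
into `k` blocks by `β` (the paper's tuples `𝐱_1, …, 𝐱_k`), on tuples
`(𝐩_i, 𝐪_i)` encoded by `p q : Fin K → α`. -/
def blockCube {α : Type*} {K : ℕ} (k : ℕ) (t : (Fin K → α) → α)
    (β : Fin K → Fin k) (p q : Fin K → α) (l : ℕ) : α :=
  t fun v => if l / 2 ^ (k - 1 - (β v).val) % 2 = 1 then q v else p v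

lemma inC_inB {m : ℕ} : ∀ y : Uni m, inC y → inB y := by
  intro y h
  cases y with
  | a i j => cases j <;> trivial
  | b i j => cases j <;> trivial
  | d k => exact h.elim
  | c => exact h.elim
  | pair x s => exact h.elim

/-- inverse of `uA`. -/
def vA {m : ℕ} : Uni m → Uni m
  | .b i 0 => .a i 0
  | .a i 0 => if i.val = 0 then .c else .b ⟨i.val - 1, by omega⟩ 0
  | .c => .b ⟨m + 1, by omega⟩ 0
  | x => x

/-- `u^A` is a bijection of `A`, and it is the only fundamental
operation producing elements of `C`: `f^A` never outputs an element of `C`,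
and a `u_{pqr}` outputs an element of `C` only as a fixed point. -/
theorem stmt6 {m : ℕ} :
    Function.Bijective (uA : Uni m → Uni m) ∧
    (∀ x : Fin (m + 2) → Uni m, ¬ inC (fA x)) ∧
    (∀ p q r : Uni m, OkTriple p q r →
      ∀ x : Uni m, inC (upqr p q r x) → upqr p q r x = x) := by
  refine ⟨Function.bijective_iff_has_inverse.2 ⟨vA, ?_, ?_⟩, ?_, ?_⟩
  · intro x
    cases x with
    | a i j =>
      cases j with
      | zero => simp [uA, vA]
      | succ j => simp [uA, vA]
    | b i j =>
      cases j with
      | zero =>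
        obtain ⟨iv, hiv⟩ := i
        by_cases h : iv + 1 < m + 2
        · simp only [uA, dif_pos h, vA, if_neg (Nat.succ_ne_zero iv)]
          exact congrArg (fun t => Uni.b t 0) (Fin.ext (by simp))
        · simp only [uA, dif_neg h, vA]
          congr 1
          exact Fin.ext (by simp; omega)
      | succ j => simp [uA, vA]
    | d k => simp [uA, vA]
    | c => simp [uA, vA]
    | pair x s => simp [uA, vA]
  · intro x
    cases x with
    | a i j =>
      cases j with
      | zero =>
        obtain ⟨iv, hiv⟩ := i
        match iv, hiv with
        | 0, _ => simp [vA, uA]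
        | iv + 1, hiv =>
          simp only [vA, if_neg (Nat.succ_ne_zero iv), uA, Nat.succ_sub_one]
          rw [dif_pos (by omega)]
      | succ j => simp [uA, vA]
    | b i j =>
      cases j with
      | zero => simp [uA, vA]
      | succ j => simp [uA, vA]
    | d k => simp [uA, vA]
    | c =>
      simp only [vA, uA]
      rw [dif_neg (by omega)]
    | pair x s => simp [uA, vA]
  · intro x
    unfold fA
    split_ifs <;> simp [inC]
  · intro p q r hok x hx
    obtain ⟨_, _, _, hp, hq, hr⟩ := hok
    exfalso
    unfold upqr at hx
    split_ifs at hx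
    · exact hq (inC_inB _ hx)
    · exact hr (inC_inB _ hx)
    · exact hp (inC_inB _ hx)
    · cases x with
      | a i j => exact hx
      | b i j => exact hx
      | d k => exact hx
      | c => exact hx
      | pair y s => exact hx

end Paper
end

section
/- The algebra A of the construction is simple: every congruence of A other than the identity relation is the full relation. Equivalently, if theta is an equivalence relation on A compatible with all fundamental operations (f^A, u^A, and all u_{pqr}^A) and theta contains a pair (p, q) with p ≠ q, then theta relates every pair of elements of A. -/
/- Common formalization of the construction from
   "On the Descending Central Series of Higher Commutators for Simple Algebras".
   We fix `n = m + 2` (so `n ≥ 2` automatically). -/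

namespace Paper

variable {m : ℕ}

section AuxSimple
variable {m : ℕ}

lemma const_not_D0 (p : Uni m) : (fun _ : Fin (m + 2) => p) ∉ D0 := by
  intro h
  have h0 := h ⟨0, by omega⟩
  have h1 := h ⟨1, by omega⟩
  simp only at h0 h1
  rcases h0 with h0 | h0 <;> rcases h1 with h1 | h1 <;> rw [h0] at h1 <;>
    simp [Fin.ext_iff] at h1

lemma fA_const (p : Uni m) :
    fA (fun _ : Fin (m + 2) => p) = .pair (fun _ => p) (stageTup fun _ => p) := by
  rw [fA, if_neg (const_not_D0 p)]

lemma notB_pair (x : Fin (m + 2) → Uni m) (s : ℕ) : ¬ inB (Uni.pair x s) := fun h => h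
lemma notB_d (k : ℕ) : ¬ inB (Uni.d k : Uni m) := fun h => h
lemma notB_c : ¬ inB (Uni.c : Uni m) := fun h => h

lemma upqr_fst (p q r : Uni m) : upqr p q r p = q := by
  rw [upqr.eq_def, if_pos rfl]

lemma upqr_snd (p q r : Uni m) (hne : p ≠ q) : upqr p q r q = r := by
  rw [upqr.eq_def, if_neg (Ne.symm hne), if_pos rfl]

lemma upqr_d_a (l₁ l₂ l₃ : ℕ) (i : Fin (m + 2)) (j : ℕ) :
    upqr (.d l₁) (.d l₂) (.d l₃) (Uni.a i j) = .a i (j + 1) := by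
  rw [upqr.eq_def]; simp

lemma upqr_d_b (l₁ l₂ l₃ : ℕ) (i : Fin (m + 2)) (j : ℕ) :
    upqr (.d l₁) (.d l₂) (.d l₃) (Uni.b i j) = .b i (j + 1) := by
  rw [upqr.eq_def]; simp

lemma upqr_012_3 : upqr (Uni.d 0 : Uni m) (.d 1) (.d 2) (.d 3) = .d 3 := by
  rw [upqr.eq_def]; simp

end AuxSimple

/-- Proposition `nsimple`: the algebra `A` is simple.  Every
equivalence relation compatible with `f^A`, `u^A` and all the `u_{pqr}^A`
which relates some pair of distinct elements relates every pair. -/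
theorem stmt7 {m : ℕ} (θ : Uni m → Uni m → Prop) (heq : Equivalence θ)
    (hf : ∀ x y : Fin (m + 2) → Uni m, (∀ i, θ (x i) (y i)) → θ (fA x) (fA y))
    (hu : ∀ x y : Uni m, θ x y → θ (uA x) (uA y))
    (hpqr : ∀ p q r : Uni m, OkTriple p q r →
      ∀ x y : Uni m, θ x y → θ (upqr p q r x) (upqr p q r y))
    (p q : Uni m) (hpq : p ≠ q) (h : θ p q) :
    ∀ x y : Uni m, θ x y := by
  classical
  -- Step 1: produce a related pair of distinct elements outside `B`.
  have hPQ : θ (fA fun _ => p) (fA fun _ => q) := hf _ _ (fun _ => h)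
  rw [fA_const, fA_const] at hPQ
  have key : ∃ X Y : Uni m, θ X Y ∧ X ≠ Y ∧ ¬ inB X ∧ ¬ inB Y := by
    refine ⟨_, _, hPQ, ?_, notB_pair _ _, notB_pair _ _⟩
    intro hE
    rw [Uni.pair.injEq] at hE
    exact hpq (congrFun hE.1 ⟨0, by omega⟩)
  obtain ⟨X, Y, hXY, hne, hX, hY⟩ := key
  -- Step 2: `X` is related to every element outside `B`.
  have hXall : ∀ Z : Uni m, ¬ inB Z → θ X Z := by
    intro Z hZ
    by_cases hZX : Z = X
    · subst hZX; exact heq.refl Z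
    · by_cases hZY : Z = Y
      · subst hZY; exact hXY
      · have ok : OkTriple X Y Z :=
          ⟨hne, fun e => hZY e.symm, fun e => hZX e.symm, hX, hY, hZ⟩
        have h2 := hpqr X Y Z ok X Y hXY
        rw [upqr_fst, upqr_snd _ _ _ hne] at h2
        exact heq.trans hXY h2
  have hnonB : ∀ Z : Uni m, ¬ inB Z → θ Z (.d 3) :=
    fun Z hZ => heq.trans (heq.symm (hXall Z hZ)) (hXall _ (notB_d 3))
  -- Step 3: the elements of `C` are related to `d 0`.
  have hcd : θ Uni.c (.d 0) :=
    heq.trans (hnonB _ notB_c) (heq.symm (hnonB _ (notB_d 0)))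
  have hC : ∀ i : ℕ, ∀ hi : i < m + 2,
      θ (.a ⟨i, hi⟩ 0) (.d 0) ∧ θ (.b ⟨i, hi⟩ 0) (.d 0) := by
    intro i
    induction i with
    | zero =>
      intro hi
      have h1 := hu _ _ hcd
      have e1 : uA (Uni.c : Uni m) = .a ⟨0, hi⟩ 0 := rfl
      have e2 : uA (Uni.d 0 : Uni m) = .d 0 := rfl
      rw [e1, e2] at h1
      refine ⟨h1, ?_⟩
      have h2 := hu _ _ h1
      have e3 : uA (Uni.a ⟨0, hi⟩ 0 : Uni m) = .b ⟨0, hi⟩ 0 := rfl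
      rw [e3, e2] at h2
      exact h2
    | succ i ih =>
      intro hi
      have hi' : i < m + 2 := by omega
      have hib := (ih hi').2
      have h1 := hu _ _ hib
      have e1 : uA (Uni.b ⟨i, hi'⟩ 0 : Uni m) = .a ⟨i + 1, hi⟩ 0 := by
        show (if h : i + 1 < m + 2 then Uni.a ⟨i + 1, h⟩ 0 else Uni.c) = _
        rw [dif_pos hi]
      have e2 : uA (Uni.d 0 : Uni m) = .d 0 := rfl
      rw [e1, e2] at h1
      refine ⟨h1, ?_⟩
      have h2 := hu _ _ h1
      have e3 : uA (Uni.a ⟨i + 1, hi⟩ 0 : Uni m) = .b ⟨i + 1, hi⟩ 0 := rfl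
      rw [e3, e2] at h2
      exact h2
  -- Step 4: all `a i j`, `b i j` are related to `d 3`.
  have hAB : ∀ (i : Fin (m + 2)) (j : ℕ), θ (.a i j) (.d 3) ∧ θ (.b i j) (.d 3) := by
    intro i j
    obtain ⟨iv, hiv⟩ := i
    induction j with
    | zero =>
      obtain ⟨ha, hb⟩ := hC iv hiv
      have hd : θ (.d 0) (.d 3) := hnonB _ (notB_d 0)
      exact ⟨heq.trans ha hd, heq.trans hb hd⟩
    | succ j ih =>
      have ok : OkTriple (Uni.d 0 : Uni m) (.d 1) (.d 2) :=
        ⟨by simp, by simp, by simp, notB_d _, notB_d _, notB_d _⟩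
      have h3 : θ (Uni.d 3 : Uni m) (.d 3) := heq.refl _
      have h1 := hpqr _ _ _ ok _ _ ih.1
      have h2 := hpqr _ _ _ ok _ _ ih.2
      rw [upqr_d_a, upqr_012_3] at h1
      rw [upqr_d_b, upqr_012_3] at h2
      exact ⟨h1, h2⟩
  -- Conclusion.
  have hall : ∀ x : Uni m, θ x (.d 3) := by
    intro x
    cases x with
    | a i j => exact (hAB i j).1
    | b i j => exact (hAB i j).2
    | d k => exact hnonB _ (notB_d k)
    | c => exact hnonB _ notB_c
    | pair x s => exact hnonB _ (notB_pair x s)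
  intro x y
  exact heq.trans (hall x) (heq.symm (hall y))


end Paper
end

section
/- Corner lemma: let tau be a term of the algebra A and let C^n_{tau^A}(p_i, q_i) = (r_1, ..., r_{2^n}) be its n-term cube on tuples p_i, q_i. If the first vertex r_1 equals all of its adjacent vertices, i.e. r_1 = r_{1 + 2^k} for all 0 <= k <= n-1, then the cube is constant: r_j = r_1 for all 1 <= j <= 2^n. -/
/- Common formalization of the construction from
   "On the Descending Central Series of Higher Commutators for Simple Algebras".
   We fix `n = m + 2` (so `n ≥ 2` automatically). -/

namespace Paper

variable {m : ℕ}

/-! Induction on `τ`. The unary operations are injective, so the corner condition passes to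
the subterm. The operation `f^A` identifies two distinct tuples only inside `D₀`, and then only
tuples agreeing in their first `n - 1` coordinates; hence the first `n - 1` arguments of `f`
satisfy the corner condition and are constant by induction. If the last argument does not, it
takes two distinct values in `C`, so it is a power of `u^A` applied to a single variable: it
depends on one direction of the cube only, and the arguments at every vertex coincide with
those at `r₁` or at the neighbour of `r₁` in that direction. -/

/-- `C ∪ {c}`, the support of the cycle `u^A`; unlike `C` it is closed under `(u^A)⁻¹`. -/
def inCycle (x : Uni m) : Prop := inC x ∨ x = .c

def uAInv : Uni m → Uni m
  | .a i 0 => if h : i.val = 0 then .c else .b ⟨i.val - 1, by omega⟩ 0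
  | .b i 0 => .a i 0
  | .c => .b (Fin.last (m + 1)) 0
  | x => x

lemma uAInv_uA : Function.LeftInverse uAInv (uA (m := m)) := by
  rintro (⟨i, _ | j⟩ | ⟨⟨i, hi⟩, _ | j⟩ | k | _ | ⟨x, s⟩) <;> simp only [uA, uAInv]
  · split_ifs with h
    · simp
    · simp [show i = m + 1 by omega, Fin.last]
  · simp

lemma uA_injective : Function.Injective (uA (m := m)) := uAInv_uA.injective

lemma inCycle_of_inCycle_uA {x : Uni m} (h : inCycle (uA x)) : inCycle x := by
  rcases x with ⟨i, _ | j⟩ | ⟨i, _ | j⟩ | k | _ | ⟨x, s⟩ <;> simp_all [uA, inCycle, inC]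

def shiftB : Uni m → Uni m
  | .a i j => .a i (j + 1)
  | .b i j => .b i (j + 1)
  | y => y

lemma shiftB_injective : Function.Injective (shiftB (m := m)) := by
  intro x y h
  cases x <;> cases y <;> simp_all [shiftB]

lemma shiftB_ne {p y : Uni m} (hp : ¬ inB p) (hyp : y ≠ p) : shiftB y ≠ p := by
  cases y <;> cases p <;> simp_all [shiftB, inB]

lemma shiftB_not_inC (x : Uni m) : ¬ inC (shiftB x) := by
  rcases x with ⟨i, j⟩ | ⟨i, j⟩ | k | _ | ⟨x, s⟩ <;> simp [shiftB, inC]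

open Classical in
lemma upqr_eq (p q r x : Uni m) :
    upqr p q r x = if x = p then q else if x = q then r else if x = r then p else shiftB x := by
  unfold upqr
  split_ifs <;> cases x <;> rfl

lemma upqr_injective {p q r : Uni m} (h : OkTriple p q r) : Function.Injective (upqr p q r) := by
  obtain ⟨hpq, hqr, hpr, hp, hq, hr⟩ := h
  intro x y hxy
  simp only [upqr_eq] at hxy
  -- a 3-cycle on `{p, q, r}`; off it `shiftB`, which is injective and avoids `p`, `q`, `r`
  split_ifs at hxy <;> grind [shiftB_injective, shiftB_ne]

lemma inB_of_inC {x : Uni m} (h : inC x) : inB x := by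
  cases x <;> simp_all [inC, inB]

lemma upqr_not_inC {p q r : Uni m} (h : OkTriple p q r) (x : Uni m) : ¬ inC (upqr p q r x) := by
  obtain ⟨-, -, -, hp, hq, hr⟩ := h
  rw [upqr_eq]
  split_ifs
  exacts [mt inB_of_inC hq, mt inB_of_inC hr, mt inB_of_inC hp, shiftB_not_inC x]

lemma fA_not_inCycle (x : Fin (m + 2) → Uni m) : ¬ inCycle (fA x) := by
  unfold fA
  split_ifs <;> simp [inCycle, inC]

lemma bitOf_le_one (x : Uni m) : bitOf x ≤ 1 := by
  cases x <;> simp [bitOf]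

def bPositions (x : Fin (m + 2) → Uni m) : Finset ℕ :=
  (Finset.univ.filter fun i : Fin (m + 2) => i.val < m + 1 ∧ bitOf (x i) = 1).map
    Fin.valEmbedding

lemma mem_bPositions {x : Fin (m + 2) → Uni m} {i : Fin (m + 2)} :
    i.val ∈ bPositions x ↔ i.val < m + 1 ∧ bitOf (x i) = 1 := by
  simp [bPositions, Fin.val_inj]

lemma code_eq_sum_two_pow (x : Fin (m + 2) → Uni m) : code x = ∑ i ∈ bPositions x, 2 ^ i := by
  rw [bPositions, Finset.sum_map, Finset.sum_filter, code]
  refine Finset.sum_congr rfl fun i _ => ?_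
  have := bitOf_le_one (x i)
  interval_cases bitOf (x i) <;> simp

lemma code_lt (x : Fin (m + 2) → Uni m) : code x < 2 ^ (m + 1) := by
  rw [code_eq_sum_two_pow]
  exact Nat.geomSum_lt le_rfl fun k hk => by
    obtain ⟨i, -, rfl⟩ := Finset.mem_map.1 hk
    exact (mem_bPositions.1 hk).1

lemma apply_eq_of_bitOf_eq {x y : Fin (m + 2) → Uni m} (hx : x ∈ D0) (hy : y ∈ D0)
    {i : Fin (m + 2)} (h : bitOf (x i) = bitOf (y i)) : x i = y i := by
  rcases hx i with h1 | h1 <;> rcases hy i with h2 | h2 <;> simp_all [bitOf]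

lemma apply_castSucc_eq_of_code_eq {x y : Fin (m + 2) → Uni m} (hx : x ∈ D0) (hy : y ∈ D0)
    (h : code x = code y) (i : Fin (m + 1)) : x i.castSucc = y i.castSucc := by
  have hS : bPositions x = bPositions y :=
    Finset.geomSum_injective le_rfl (by simpa only [code_eq_sum_two_pow] using h)
  have hmem : i.castSucc.val ∈ bPositions x ↔ i.castSucc.val ∈ bPositions y := by rw [hS]
  rw [mem_bPositions, mem_bPositions] at hmem
  simp only [Fin.val_castSucc, i.isLt, true_and] at hmem
  have := bitOf_le_one (x i.castSucc)
  have := bitOf_le_one (y i.castSucc)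
  exact apply_eq_of_bitOf_eq hx hy (by omega)

lemma code_eq_of_fA_eq {x y : Fin (m + 2) → Uni m} (hx : x ∈ D0) (hy : y ∈ D0)
    (h : fA x = fA y) : code x = code y := by
  have := code_lt x
  have := code_lt y
  simp only [fA, if_pos hx, if_pos hy] at h
  split_ifs at h <;> simp only [Uni.d.injEq] at h <;> omega

theorem fA_eq_fA {x y : Fin (m + 2) → Uni m} (h : fA x = fA y) :
    x = y ∨ x ∈ D0 ∧ y ∈ D0 ∧ ∀ i : Fin (m + 1), x i.castSucc = y i.castSucc := by
  by_cases hx : x ∈ D0 <;> by_cases hy : y ∈ D0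
  · exact .inr ⟨hx, hy, apply_castSucc_eq_of_code_eq hx hy (code_eq_of_fA_eq hx hy h)⟩
  all_goals simp only [fA, hx, hy, if_true, if_false] at h
  · split_ifs at h
  · split_ifs at h
  · exact .inl (Uni.pair.inj h).1

lemma inCycle_of_mem_D0 {x : Fin (m + 2) → Uni m} (hx : x ∈ D0) (i : Fin (m + 2)) :
    inCycle (x i) := by
  rcases hx i with h | h <;> simp [h, inCycle, inC]

theorem exists_eval_eq_iterate_uA {K : ℕ} {t : Tm m K} (ht : TmOk t) {x y : Fin K → Uni m}
    (hx : inCycle (eval t x)) (hy : inCycle (eval t y)) (hne : eval t x ≠ eval t y) :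
    ∃ e v, ∀ z, eval t z = uA^[e] (z v) := by
  induction t with
  | var v => exact ⟨0, v, fun _ => rfl⟩
  | f args => exact absurd hx (fA_not_inCycle _)
  | u t ih =>
    obtain ⟨e, v, hev⟩ := ih ht (inCycle_of_inCycle_uA hx) (inCycle_of_inCycle_uA hy)
      (mt (congrArg uA) hne)
    exact ⟨e + 1, v, fun z => by simp only [eval, hev, Function.iterate_succ_apply']⟩
  | upqr p q r t ih =>
    have hc (z : Uni m) (hz : inCycle (upqr p q r z)) : upqr p q r z = .c :=
      hz.resolve_left (upqr_not_inC ht.1 z)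
    exact absurd ((hc _ hx).trans (hc _ hy).symm) hne

section Cube

variable {α : Type*} {K k : ℕ} (β : Fin K → Fin k) (p q : Fin K → α)

def blockVertex (l : ℕ) : Fin K → α :=
  fun v => if l / 2 ^ (k - 1 - (β v).val) % 2 = 1 then q v else p v

lemma blockCube_eq_blockVertex (t : (Fin K → α) → α) (l : ℕ) :
    blockCube k t β p q l = t (blockVertex β p q l) := rfl

lemma blockVertex_zero : blockVertex β p q 0 = p := by
  funext v
  simp [blockVertex]

lemma blockVertex_apply_eq_or (l : ℕ) (v : Fin K) :
    blockVertex β p q l v = p v ∨ blockVertex β p q l v = q v := by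
  unfold blockVertex
  split_ifs <;> simp

lemma blockVertex_two_pow_apply_self (v : Fin K) :
    blockVertex β p q (2 ^ (k - 1 - (β v).val)) v = q v := by
  have h := @Nat.testBit_two_pow (k - 1 - (β v).val) (k - 1 - (β v).val)
  rw [Nat.testBit_eq_decide_div_mod_eq] at h
  simp only [blockVertex, decide_true, decide_eq_true_eq] at h ⊢
  rw [if_pos h]

def IsCornerEqual (t : (Fin K → α) → α) : Prop :=
  ∀ j < k, t (blockVertex β p q (2 ^ j)) = t p

def IsCubeConstant (t : (Fin K → α) → α) : Prop :=
  ∀ l, t (blockVertex β p q l) = t p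

variable {β p q}

lemma isCubeConstant_apply {v : Fin K} (h : IsCornerEqual β p q (· v)) :
    IsCubeConstant β p q (· v) := by
  have hqp : q v = p v := by
    simpa only [blockVertex_two_pow_apply_self] using
      h (k - 1 - (β v).val) (by have := (β v).pos; omega)
  intro l
  rcases blockVertex_apply_eq_or β p q l v with hl | hl <;> simp only [hl, hqp]

lemma isCubeConstant_comp {g : α → α} (hg : Function.Injective g) {t : (Fin K → α) → α}
    (ht : IsCornerEqual β p q t → IsCubeConstant β p q t) (h : IsCornerEqual β p q (g ∘ t)) :
    IsCubeConstant β p q (g ∘ t) :=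
  fun l => congrArg g (ht (fun j hj => hg (h j hj)) l)

end Cube

section Terms

variable {K : ℕ} {β : Fin K → Fin (m + 2)} {p q : Fin K → Uni m}

lemma isCubeConstant_eval_f {args : Fin (m + 2) → Tm m K} (hok : ∀ i, TmOk (args i))
    (ih : ∀ i, IsCornerEqual β p q (eval (args i)) → IsCubeConstant β p q (eval (args i)))
    (h : IsCornerEqual β p q (eval (.f args))) : IsCubeConstant β p q (eval (.f args)) := by
  have hinit (i : Fin (m + 1)) : IsCubeConstant β p q (eval (args i.castSucc)) :=
    ih _ fun j hj => (fA_eq_fA (h j hj)).elim (congrFun · i.castSucc) (·.2.2 i)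
  by_cases hlast : IsCornerEqual β p q (eval (args (Fin.last (m + 1))))
  · intro l
    refine congrArg fA (funext fun i => ?_)
    induction i using Fin.lastCases with
    | last => exact ih _ hlast l
    | cast i => exact hinit i l
  obtain ⟨j, hj, hne⟩ : ∃ j < m + 2, eval (args (Fin.last (m + 1))) (blockVertex β p q (2 ^ j))
      ≠ eval (args (Fin.last (m + 1))) p := by
    simpa [IsCornerEqual] using hlast
  obtain ⟨hD, hD0, -⟩ := (fA_eq_fA (h j hj)).resolve_left fun he => hne (congrFun he _)
  obtain ⟨e, v, hev⟩ :=
    exists_eval_eq_iterate_uA (hok _) (inCycle_of_mem_D0 hD _) (inCycle_of_mem_D0 hD0 _) hne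
  have hjv : blockVertex β p q (2 ^ j) v = q v :=
    (blockVertex_apply_eq_or β p q _ v).resolve_left fun h' => hne (by rw [hev, hev, h'])
  intro l
  rcases blockVertex_apply_eq_or β p q l v with hl | hl
  · refine congrArg fA (funext fun i => ?_)
    induction i using Fin.lastCases with
    | last => rw [hev, hev, hl]
    | cast i => exact hinit i l
  · refine Eq.trans (congrArg fA (funext fun i => ?_)) (h j hj)
    induction i using Fin.lastCases with
    | last => rw [hev, hev, hl, hjv]
    | cast i => exact (hinit i l).trans (hinit i (2 ^ j)).symm

theorem isCubeConstant_eval {τ : Tm m K} (hok : TmOk τ) (h : IsCornerEqual β p q (eval τ)) :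
    IsCubeConstant β p q (eval τ) := by
  induction τ with
  | var v => exact isCubeConstant_apply h
  | f args ih => exact isCubeConstant_eval_f hok (fun i => ih i (hok i)) h
  | u t ih => exact isCubeConstant_comp uA_injective (ih hok) h
  | upqr p' q' r' t ih => exact isCubeConstant_comp (upqr_injective hok.1) (ih hok.2) h

end Terms

/-- Lemma `cornerequal`: if the first vertex of an `n`-term
cube of a term operation of `A` equals all of its adjacent vertices (the
vertices with 0-indexed positions `2^j`), then the cube is constant. -/
theorem stmt10 {m K : ℕ} (τ : Tm m K) (hok : TmOk τ)
    (β : Fin K → Fin (m + 2)) (p q : Fin K → Uni m)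
    (hcorner : ∀ j, j < m + 2 →
      blockCube (m + 2) (eval τ) β p q (2 ^ j) = blockCube (m + 2) (eval τ) β p q 0) :
    ∀ l, l < 2 ^ (m + 2) →
      blockCube (m + 2) (eval τ) β p q l = blockCube (m + 2) (eval τ) β p q 0 := by
  simp only [blockCube_eq_blockVertex, blockVertex_zero] at hcorner ⊢
  exact fun l _ => isCubeConstant_eval hok hcorner l

end Paper
end
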